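/- arXiv:1904.12014 — 2 statements merged into one kernel-verified Lean document; each statement's English description precedes it below -/
import Mathlib

section
/- Let V = (ℤ/7ℤ)⁴ with standard basis e₀, e₁, e₂, e₃, equipped with the symmetric bilinear form B given by B(x, y) = x₀y₁ + x₁y₀ − x₂y₃ − x₃y₂, and let T : V → V be the linear map with T(e₀) = 2e₀, T(e₁) = 4e₁, T(e₂) = 4e₂, T(e₃) = 2e₃. Then a ℤ/7ℤ-subspace M ⊆ V satisfies T(M) ⊆ M and M = M^⊥ (where M^⊥ = {y ∈ V : B(x, y) = 0 for all x ∈ M}) if and only if M is one of the following: (1) span{e₀, e₃}; (2) span{e₁, e₂}; (3) span{e₀, e₂} or span{e₁, e₃}; (4) span{e₀ + r·e₃, e₁ + r⁻¹·e₂} for some nonzero r ∈ ℤ/7ℤ. -/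
private lemma ext4 {x y : Fin 4 → ZMod 7} (h0 : x 0 = y 0) (h1 : x 1 = y 1)
    (h2 : x 2 = y 2) (h3 : x 3 = y 3) : x = y := by
  funext i; fin_cases i <;> assumption

private lemma h7 : (7:ZMod 7) = 0 := by decide

/-- Lemma 3.1 of the paper: classification of equivariant metabolizers.
`V = (ℤ/7)⁴` with bilinear form `B(x,y) = x₀y₁ + x₁y₀ − x₂y₃ − x₃y₂` and the linear
map `T` with eigenbasis `e₀ ↦ 2e₀, e₁ ↦ 4e₁, e₂ ↦ 4e₂, e₃ ↦ 2e₃`.  A subspace `M`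
is `T`-invariant and equal to its own `B`-orthogonal complement iff it is one of the
listed spans. -/
theorem stmt6 (M : Submodule (ZMod 7) (Fin 4 → ZMod 7))
    (e : Fin 4 → (Fin 4 → ZMod 7)) (he : ∀ i, e i = Pi.single i 1)
    (B : (Fin 4 → ZMod 7) → (Fin 4 → ZMod 7) → ZMod 7)
    (hB : ∀ x y, B x y = x 0 * y 1 + x 1 * y 0 - x 2 * y 3 - x 3 * y 2)
    (T : (Fin 4 → ZMod 7) → (Fin 4 → ZMod 7))
    (hT : ∀ x, T x = ![2 * x 0, 4 * x 1, 4 * x 2, 2 * x 3]) :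
    ((∀ x ∈ M, T x ∈ M) ∧ (∀ y, y ∈ M ↔ ∀ x ∈ M, B x y = 0)) ↔
      (M = Submodule.span (ZMod 7) {e 0, e 3} ∨
       M = Submodule.span (ZMod 7) {e 1, e 2} ∨
       M = Submodule.span (ZMod 7) {e 0, e 2} ∨
       M = Submodule.span (ZMod 7) {e 1, e 3} ∨
       ∃ r : ZMod 7, r ≠ 0 ∧
         M = Submodule.span (ZMod 7) {e 0 + r • e 3, e 1 + r⁻¹ • e 2}) := by
  have E0 : e 0 = ![1,0,0,0] := by rw [he]; apply ext4 <;> simp [Pi.single_apply]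
  have E1 : e 1 = ![0,1,0,0] := by rw [he]; apply ext4 <;> simp [Pi.single_apply]
  have E2 : e 2 = ![0,0,1,0] := by rw [he]; apply ext4 <;> simp [Pi.single_apply]
  have E3 : e 3 = ![0,0,0,1] := by rw [he]; apply ext4 <;> simp [Pi.single_apply]
  haveI : Fact (Nat.Prime 7) := ⟨by norm_num⟩
  have Bval : ∀ (a b c d : ZMod 7) (y : Fin 4 → ZMod 7),
      B ![a,b,c,d] y = a * y 1 + b * y 0 - c * y 3 - d * y 2 := by
    intro a b c d y; rw [hB]; simp
  have Bval2 : ∀ (a b c d : ZMod 7) (y : Fin 4 → ZMod 7),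
      B y ![a,b,c,d] = y 0 * b + y 1 * a - y 2 * d - y 3 * c := by
    intro a b c d y; rw [hB]; simp
  constructor
  · rintro ⟨hTM, hMperp⟩
    have hp : ∀ x ∈ M, (![x 0, 0, 0, x 3] : Fin 4 → ZMod 7) ∈ M := by
      intro x hx
      have h2 : (4:ZMod 7) • ((4:ZMod 7) • x - T x) ∈ M :=
        M.smul_mem _ (M.sub_mem (M.smul_mem _ hx) (hTM x hx))
      have he' : (![x 0, 0, 0, x 3] : Fin 4 → ZMod 7)
          = (4:ZMod 7) • ((4:ZMod 7) • x - T x) := by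
        apply ext4 <;> simp only [hT, Pi.smul_apply, Pi.sub_apply, smul_eq_mul,
          Matrix.cons_val_zero, Matrix.cons_val_one, Matrix.head_cons,
          Matrix.cons_val_two, Matrix.tail_cons, Matrix.cons_val_three] <;>
          first
          | ring1
          | linear_combination (-(x 0)) * h7
          | linear_combination (-(x 3)) * h7
      rwa [he']
    have hq : ∀ x ∈ M, (![0, x 1, x 2, 0] : Fin 4 → ZMod 7) ∈ M := by
      intro x hx
      have h2 : x - ![x 0, 0, 0, x 3] ∈ M := M.sub_mem hx (hp x hx)
      have he' : (![0, x 1, x 2, 0] : Fin 4 → ZMod 7) = x - ![x 0, 0, 0, x 3] := by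
        apply ext4 <;> simp
      rwa [he']
    have R : ∀ x ∈ M, ∀ y ∈ M, x 0 * y 1 = x 3 * y 2 := by
      intro x hx y hy
      have h := (hMperp (![0, y 1, y 2, 0])).mp (hq y hy) _ (hp x hx)
      rw [Bval] at h
      simp only [Matrix.cons_val_zero, Matrix.cons_val_one, Matrix.head_cons,
        Matrix.cons_val_two, Matrix.tail_cons, Matrix.cons_val_three] at h
      linear_combination h
    by_cases hb : ∀ x ∈ M, x 1 = 0
    · by_cases hc : ∀ x ∈ M, x 2 = 0
      · -- span {e0, e3}
        left
        apply le_antisymm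
        · intro z hz
          rw [Submodule.mem_span_pair]
          refine ⟨z 0, z 3, ?_⟩
          apply ext4 <;> simp [E0, E3, hb z hz, hc z hz]
        · rw [Submodule.span_le, Set.insert_subset_iff, Set.singleton_subset_iff]
          constructor
          · rw [SetLike.mem_coe, hMperp]
            intro x hx
            rw [E0, Bval2]
            simp [hb x hx]
          · rw [SetLike.mem_coe, hMperp]
            intro x hx
            rw [E3, Bval2]
            simp [hc x hx]
      · push_neg at hc
        obtain ⟨w, hw, hw2⟩ := hc
        have hd : ∀ x ∈ M, x 3 = 0 := by
          intro y hy
          have h := R y hy w hw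
          rw [hb w hw, mul_zero] at h
          rcases mul_eq_zero.mp h.symm with h' | h'
          · exact h'
          · exact absurd h' hw2
        right; right; left
        apply le_antisymm
        · intro z hz
          rw [Submodule.mem_span_pair]
          refine ⟨z 0, z 2, ?_⟩
          apply ext4 <;> simp [E0, E2, hb z hz, hd z hz]
        · rw [Submodule.span_le, Set.insert_subset_iff, Set.singleton_subset_iff]
          constructor
          · rw [SetLike.mem_coe, hMperp]
            intro x hx
            rw [E0, Bval2]
            simp [hb x hx]
          · rw [SetLike.mem_coe, hMperp]
            intro x hx
            rw [E2, Bval2]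
            simp [hd x hx]
    · push_neg at hb
      obtain ⟨w, hw, hw1⟩ := hb
      by_cases ha : ∀ x ∈ M, x 0 = 0
      · by_cases hd : ∀ x ∈ M, x 3 = 0
        · right; left
          apply le_antisymm
          · intro z hz
            rw [Submodule.mem_span_pair]
            refine ⟨z 1, z 2, ?_⟩
            apply ext4 <;> simp [E1, E2, ha z hz, hd z hz]
          · rw [Submodule.span_le, Set.insert_subset_iff, Set.singleton_subset_iff]
            constructor
            · rw [SetLike.mem_coe, hMperp]
              intro x hx
              rw [E1, Bval2]
              simp [ha x hx]
            · rw [SetLike.mem_coe, hMperp]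
              intro x hx
              rw [E2, Bval2]
              simp [hd x hx]
        · push_neg at hd
          obtain ⟨u, hu, hu3⟩ := hd
          have hc : ∀ x ∈ M, x 2 = 0 := by
            intro y hy
            have h := R u hu y hy
            rw [ha u hu, zero_mul] at h
            rcases mul_eq_zero.mp h.symm with h' | h'
            · exact absurd h' hu3
            · exact h'
          right; right; right; left
          apply le_antisymm
          · intro z hz
            rw [Submodule.mem_span_pair]
            refine ⟨z 1, z 3, ?_⟩
            apply ext4 <;> simp [E1, E3, ha z hz, hc z hz]
          · rw [Submodule.span_le, Set.insert_subset_iff, Set.singleton_subset_iff]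
            constructor
            · rw [SetLike.mem_coe, hMperp]
              intro x hx
              rw [E1, Bval2]
              simp [ha x hx]
            · rw [SetLike.mem_coe, hMperp]
              intro x hx
              rw [E3, Bval2]
              simp [hc x hx]
      · push_neg at ha
        obtain ⟨u, hu, hu0⟩ := ha
        have key := R u hu w hw
        have hu3 : u 3 ≠ 0 := by
          intro h; rw [h, zero_mul] at key
          exact mul_ne_zero hu0 hw1 key
        have hw2 : w 2 ≠ 0 := by
          intro h; rw [h, mul_zero] at key
          exact mul_ne_zero hu0 hw1 key
        set r : ZMod 7 := u 3 * (u 0)⁻¹ with hrdef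
        have hr : r ≠ 0 := mul_ne_zero hu3 (inv_ne_zero hu0)
        have hiu : (u 0)⁻¹ * u 0 = 1 := inv_mul_cancel₀ hu0
        have hiw : (w 1)⁻¹ * w 1 = 1 := inv_mul_cancel₀ hw1
        have hir : r⁻¹ * r = 1 := inv_mul_cancel₀ hr
        -- s = w 2 * (w 1)⁻¹, and r * s = 1 so r⁻¹ = s
        have hs : r⁻¹ = w 2 * (w 1)⁻¹ := by
          have h1 : r * (w 2 * (w 1)⁻¹) = 1 := by
            rw [hrdef]
            linear_combination (-(u 0)⁻¹ * (w 1)⁻¹) * key + ((w 1)⁻¹ * w 1) * hiu + hiw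
          exact inv_eq_of_mul_eq_one_right h1
        have g1mem : (![1, 0, 0, r] : Fin 4 → ZMod 7) ∈ M := by
          have h2 : (u 0)⁻¹ • (![u 0, 0, 0, u 3] : Fin 4 → ZMod 7) ∈ M :=
            M.smul_mem _ (hp u hu)
          have he' : (![1, 0, 0, r] : Fin 4 → ZMod 7)
              = (u 0)⁻¹ • ![u 0, 0, 0, u 3] := by
            apply ext4 <;> simp [hrdef] <;> first | ring1 | linear_combination -hiu
          rwa [he']
        have g2mem : (![0, 1, r⁻¹, 0] : Fin 4 → ZMod 7) ∈ M := by
          have h2 : (w 1)⁻¹ • (![0, w 1, w 2, 0] : Fin 4 → ZMod 7) ∈ M :=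
            M.smul_mem _ (hq w hw)
          have he' : (![0, 1, r⁻¹, 0] : Fin 4 → ZMod 7)
              = (w 1)⁻¹ • ![0, w 1, w 2, 0] := by
            apply ext4 <;> simp [hs] <;> first | ring1 | linear_combination -hiw
          rwa [he']
        right; right; right; right
        refine ⟨r, hr, ?_⟩
        have hv1 : e 0 + r • e 3 = ![1, 0, 0, r] := by
          rw [E0, E3]; apply ext4 <;> simp
        have hv2 : e 1 + r⁻¹ • e 2 = ![0, 1, r⁻¹, 0] := by
          rw [E1, E2]; apply ext4 <;> simp
        rw [hv1, hv2]
        apply le_antisymm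
        · intro z hz
          rw [Submodule.mem_span_pair]
          refine ⟨z 0, z 1, ?_⟩
          have k1 := R (![1, 0, 0, r]) g1mem z hz
          simp only [Matrix.cons_val_zero, Matrix.cons_val_one, Matrix.head_cons,
            Matrix.cons_val_two, Matrix.tail_cons, Matrix.cons_val_three] at k1
          -- k1 : 1 * z 1 = r * z 2
          have k2 := R z hz (![0, 1, r⁻¹, 0]) g2mem
          simp only [Matrix.cons_val_zero, Matrix.cons_val_one, Matrix.head_cons,
            Matrix.cons_val_two, Matrix.tail_cons, Matrix.cons_val_three] at k2
          -- k2 : z 0 * 1 = z 3 * r⁻¹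
          have hz2 : z 2 = r⁻¹ * z 1 := by
            linear_combination (-(r⁻¹)) * k1 - z 2 * hir
          have hz3 : z 3 = r * z 0 := by
            linear_combination (-r) * k2 - z 3 * hir
          apply ext4 <;> simp [hz2, hz3] <;> ring1
        · rw [Submodule.span_le, Set.insert_subset_iff, Set.singleton_subset_iff]
          exact ⟨g1mem, g2mem⟩
  · -- reverse direction
    intro h
    rcases h with rfl | rfl | rfl | rfl | ⟨r, hr, rfl⟩
    · -- span {e0, e3}
      have hmem : ∀ y : Fin 4 → ZMod 7,
          y ∈ Submodule.span (ZMod 7) {e 0, e 3} ↔ y 1 = 0 ∧ y 2 = 0 := by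
        intro y
        rw [Submodule.mem_span_pair]
        constructor
        · rintro ⟨m, n, rfl⟩
          constructor <;> simp [E0, E3]
        · rintro ⟨h1, h2⟩
          exact ⟨y 0, y 3, by apply ext4 <;> simp [E0, E3, h1, h2]⟩
      constructor
      · intro x hx
        rw [hmem] at hx ⊢
        rw [hT]
        constructor <;> simp [hx.1, hx.2]
      · intro y
        rw [hmem]
        constructor
        · rintro ⟨h1, h2⟩ x hx
          rw [hmem] at hx
          rw [hB, h1, h2, hx.1, hx.2]
          ring1
        · intro hall
          have k0 := hall (e 0) ((hmem _).mpr (by rw [E0]; constructor <;> simp))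
          rw [E0, Bval] at k0
          have k3 := hall (e 3) ((hmem _).mpr (by rw [E3]; constructor <;> simp))
          rw [E3, Bval] at k3
          constructor
          · linear_combination k0
          · linear_combination -k3
    · -- span {e1, e2}
      have hmem : ∀ y : Fin 4 → ZMod 7,
          y ∈ Submodule.span (ZMod 7) {e 1, e 2} ↔ y 0 = 0 ∧ y 3 = 0 := by
        intro y
        rw [Submodule.mem_span_pair]
        constructor
        · rintro ⟨m, n, rfl⟩
          constructor <;> simp [E1, E2]
        · rintro ⟨h1, h2⟩
          exact ⟨y 1, y 2, by apply ext4 <;> simp [E1, E2, h1, h2]⟩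
      constructor
      · intro x hx
        rw [hmem] at hx ⊢
        rw [hT]
        constructor <;> simp [hx.1, hx.2]
      · intro y
        rw [hmem]
        constructor
        · rintro ⟨h1, h2⟩ x hx
          rw [hmem] at hx
          rw [hB, h1, h2, hx.1, hx.2]
          ring1
        · intro hall
          have k0 := hall (e 1) ((hmem _).mpr (by rw [E1]; constructor <;> simp))
          rw [E1, Bval] at k0
          have k3 := hall (e 2) ((hmem _).mpr (by rw [E2]; constructor <;> simp))
          rw [E2, Bval] at k3
          constructor
          · linear_combination k0
          · linear_combination -k3
    · -- span {e0, e2}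
      have hmem : ∀ y : Fin 4 → ZMod 7,
          y ∈ Submodule.span (ZMod 7) {e 0, e 2} ↔ y 1 = 0 ∧ y 3 = 0 := by
        intro y
        rw [Submodule.mem_span_pair]
        constructor
        · rintro ⟨m, n, rfl⟩
          constructor <;> simp [E0, E2]
        · rintro ⟨h1, h2⟩
          exact ⟨y 0, y 2, by apply ext4 <;> simp [E0, E2, h1, h2]⟩
      constructor
      · intro x hx
        rw [hmem] at hx ⊢
        rw [hT]
        constructor <;> simp [hx.1, hx.2]
      · intro y
        rw [hmem]
        constructor
        · rintro ⟨h1, h2⟩ x hx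
          rw [hmem] at hx
          rw [hB, h1, h2, hx.1, hx.2]
          ring1
        · intro hall
          have k0 := hall (e 0) ((hmem _).mpr (by rw [E0]; constructor <;> simp))
          rw [E0, Bval] at k0
          have k3 := hall (e 2) ((hmem _).mpr (by rw [E2]; constructor <;> simp))
          rw [E2, Bval] at k3
          constructor
          · linear_combination k0
          · linear_combination -k3
    · -- span {e1, e3}
      have hmem : ∀ y : Fin 4 → ZMod 7,
          y ∈ Submodule.span (ZMod 7) {e 1, e 3} ↔ y 0 = 0 ∧ y 2 = 0 := by
        intro y
        rw [Submodule.mem_span_pair]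
        constructor
        · rintro ⟨m, n, rfl⟩
          constructor <;> simp [E1, E3]
        · rintro ⟨h1, h2⟩
          exact ⟨y 1, y 3, by apply ext4 <;> simp [E1, E3, h1, h2]⟩
      constructor
      · intro x hx
        rw [hmem] at hx ⊢
        rw [hT]
        constructor <;> simp [hx.1, hx.2]
      · intro y
        rw [hmem]
        constructor
        · rintro ⟨h1, h2⟩ x hx
          rw [hmem] at hx
          rw [hB, h1, h2, hx.1, hx.2]
          ring1
        · intro hall
          have k0 := hall (e 1) ((hmem _).mpr (by rw [E1]; constructor <;> simp))
          rw [E1, Bval] at k0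
          have k3 := hall (e 3) ((hmem _).mpr (by rw [E3]; constructor <;> simp))
          rw [E3, Bval] at k3
          constructor
          · linear_combination k0
          · linear_combination -k3
    · -- parametric case
      have hri : r * r⁻¹ = 1 := mul_inv_cancel₀ hr
      have hir : r⁻¹ * r = 1 := inv_mul_cancel₀ hr
      have hv1 : e 0 + r • e 3 = ![1, 0, 0, r] := by
        rw [E0, E3]; apply ext4 <;> simp
      have hv2 : e 1 + r⁻¹ • e 2 = ![0, 1, r⁻¹, 0] := by
        rw [E1, E2]; apply ext4 <;> simp
      rw [hv1, hv2]
      have hmem : ∀ y : Fin 4 → ZMod 7,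
          y ∈ Submodule.span (ZMod 7) {(![1, 0, 0, r] : Fin 4 → ZMod 7), ![0, 1, r⁻¹, 0]}
            ↔ y 2 = r⁻¹ * y 1 ∧ y 3 = r * y 0 := by
        intro y
        rw [Submodule.mem_span_pair]
        constructor
        · rintro ⟨m, n, rfl⟩
          constructor <;> simp <;> ring1
        · rintro ⟨h1, h2⟩
          exact ⟨y 0, y 1, by apply ext4 <;> simp [h1, h2] <;> ring1⟩
      constructor
      · intro x hx
        rw [hmem] at hx ⊢
        rw [hT]
        constructor <;> simp [hx.1, hx.2] <;> ring1
      · intro y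
        rw [hmem]
        constructor
        · rintro ⟨h1, h2⟩ x hx
          rw [hmem] at hx
          rw [hB, h1, h2, hx.1, hx.2]
          linear_combination (-(x 1 * y 0 + x 0 * y 1)) * hri
        · intro hall
          have k1 := hall (![1, 0, 0, r]) ((hmem _).mpr (by constructor <;> simp))
          rw [Bval] at k1
          have k2 := hall (![0, 1, r⁻¹, 0]) ((hmem _).mpr (by constructor <;> simp))
          rw [Bval] at k2
          constructor
          · linear_combination (-r⁻¹) * k1 - y 2 * hir
          · linear_combination (-r) * k2 - y 3 * hir
end

section
/- Let A be an abelian group (written additively), ρ : A → A a group homomorphism with ρ ∘ ρ = id, and H ⊆ A a subgroup with ρ(H) ⊆ H. Let F = {a ∈ A : ρ(a) = a} be the fixed subgroup of ρ, and let (x_i)_{i ∈ I} be a family of elements of A. Then the following are equivalent: (1) for every finitely supported family of integers (a_i)_{i ∈ I}, if Σ a_i·x_i ∈ F + H then a_i = 0 for all i; (2) for every finitely supported family of integers (a_i)_{i ∈ I}, if Σ a_i·(x_i − ρ(x_i)) ∈ H then a_i = 0 for all i. -/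
/-- Abstract content of Lemma 4.4: for an involution `ρ` of an abelian group `A`,
a `ρ`-invariant subgroup `H`, and a family `x i`, linear independence modulo
`Fix(ρ) + H` of the `x i` is equivalent to linear independence modulo `H` of the
elements `x i − ρ(x i)`. -/
theorem stmt9 {A I : Type*} [AddCommGroup A] (ρ : A →+ A) (hρ : ∀ a, ρ (ρ a) = a)
    (H : AddSubgroup A) (hH : ∀ a ∈ H, ρ a ∈ H) (x : I → A) :
    (∀ a : I →₀ ℤ,
        (∃ f h : A, ρ f = f ∧ h ∈ H ∧ (a.sum fun i n => n • x i) = f + h) → a = 0) ↔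
    (∀ a : I →₀ ℤ, (a.sum fun i n => n • (x i - ρ (x i))) ∈ H → a = 0) := by
  have key : ∀ a : I →₀ ℤ, (a.sum fun i n => n • (x i - ρ (x i)))
      = (a.sum fun i n => n • x i) - ρ (a.sum fun i n => n • x i) := by
    intro a
    rw [map_finsuppSum, ← Finsupp.sum_sub]
    refine Finsupp.sum_congr fun i _ => ?_
    rw [map_zsmul, smul_sub]
  constructor
  · intro h1 a ha
    set s := a.sum fun i n => n • x i with hs
    have hsum2 : ((2 : ℤ) • a).sum (fun i n => n • x i) = (2 : ℤ) • s := by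
      rw [Finsupp.sum_smul_index' (fun i => zero_smul ℤ (x i))]
      rw [hs, Finsupp.smul_sum]
      exact Finsupp.sum_congr fun i _ => (smul_smul 2 (a i) (x i)).symm
    have hmem : s - ρ s ∈ H := by rw [← key]; exact ha
    have h2a : (2 : ℤ) • a = 0 := by
      apply h1
      refine ⟨s + ρ s, s - ρ s, ?_, hmem, ?_⟩
      · rw [map_add, hρ]; abel
      · rw [hsum2, two_smul]; abel
    ext i
    have : (2 : ℤ) * a i = 0 := by simpa using DFunLike.congr_fun h2a i
    simpa using mul_eq_zero.mp this
  · intro h2 a ⟨f, h, hf, hmem, heq⟩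
    apply h2
    rw [key, heq, map_add, hf]
    have : f + h - (f + ρ h) = h - ρ h := by abel
    rw [this]
    exact sub_mem hmem (hH h hmem)
end
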